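/- arXiv:1304.4877 — 4 statements merged into one kernel-verified Lean document; each statement's English description precedes it below -/
import Mathlib

section
/- Fix p ∈ ℝ with p ≠ 0. For every point C₀ = (0,0,c) on the z-axis with |c| > |p|, let S be the sphere centered at (0,0,c) of radius √(c² - p²). Then every circle passing through P₁ = (0,0,p) and P₂ = (0,0,-p) intersects S orthogonally, that is, at each intersection point Q of the circle and S, the tangent line of the circle at Q contains the center (0,0,c) of S. -/
/-- Euclidean distance on `ℝ × ℝ × ℝ`. -/
noncomputable def dist3 (P Q : ℝ × ℝ × ℝ) : ℝ :=
  Real.sqrt ((P.1 - Q.1) ^ 2 + (P.2.1 - Q.2.1) ^ 2 + (P.2.2 - Q.2.2) ^ 2)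

/-- Dot product on `ℝ × ℝ × ℝ`. -/
def dot3 (v w : ℝ × ℝ × ℝ) : ℝ := v.1 * w.1 + v.2.1 * w.2.1 + v.2.2 * w.2.2

/-- `s` is the circle with center `C`, radius `ρ` in the plane through `C`
with normal vector `n`. -/
def IsCircle3 (s : Set (ℝ × ℝ × ℝ)) (C : ℝ × ℝ × ℝ) (ρ : ℝ) : Prop :=
  0 < ρ ∧ ∃ n : ℝ × ℝ × ℝ, n ≠ 0 ∧
    s = {X | dist3 X C = ρ ∧ dot3 (X - C) n = 0}


/-- Cross product on `ℝ × ℝ × ℝ`. -/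
def cross3 (v w : ℝ × ℝ × ℝ) : ℝ × ℝ × ℝ :=
  (v.2.1 * w.2.2 - v.2.2 * w.2.1, v.2.2 * w.1 - v.1 * w.2.2, v.1 * w.2.1 - v.2.1 * w.1)

lemma triple_zero (v n u : ℝ × ℝ × ℝ) (h1 : dot3 v n = 0) (h2 : dot3 v u = 0) :
    cross3 v (cross3 n u) = 0 := by
  obtain ⟨v1, v2, v3⟩ := v
  obtain ⟨n1, n2, n3⟩ := n
  obtain ⟨u1, u2, u3⟩ := u
  simp only [cross3, dot3, Prod.ext_iff, Prod.fst_zero, Prod.snd_zero] at h1 h2 ⊢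
  refine ⟨?_, ?_, ?_⟩
  · linear_combination n1 * h2 - u1 * h1
  · linear_combination n2 * h2 - u2 * h1
  · linear_combination n3 * h2 - u3 * h1

lemma cross_zero_parallel (v w : ℝ × ℝ × ℝ) (hw : dot3 w w ≠ 0)
    (h : cross3 v w = 0) : v = (dot3 v w / dot3 w w) • w := by
  obtain ⟨v1, v2, v3⟩ := v
  obtain ⟨w1, w2, w3⟩ := w
  simp only [cross3, dot3, Prod.ext_iff, Prod.smul_mk, smul_eq_mul,
    Prod.fst_zero, Prod.snd_zero] at h hw ⊢
  obtain ⟨h1, h2, h3⟩ := h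
  refine ⟨?_, ?_, ?_⟩
  · rw [div_mul_eq_mul_div, eq_div_iff hw]; linear_combination w2 * h3 - w3 * h2
  · rw [div_mul_eq_mul_div, eq_div_iff hw]; linear_combination w3 * h1 - w1 * h3
  · rw [div_mul_eq_mul_div, eq_div_iff hw]; linear_combination w1 * h2 - w2 * h1

set_option maxHeartbeats 1000000 in
/-- Every circle through `P₁ = (0,0,p)` and `P₂ = (0,0,-p)` meets the sphere with
center `(0,0,c)` (with `c² > p²`) and radius `√(c²-p²)` orthogonally: at each common
point `Q`, the tangent line of the circle at `Q` passes through the center `(0,0,c)`. -/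
theorem stmt2 (p c : ℝ) (hp : p ≠ 0) (hc : p ^ 2 < c ^ 2)
    (s : Set (ℝ × ℝ × ℝ)) (C n : ℝ × ℝ × ℝ) (ρ : ℝ)
    (hρ : 0 < ρ) (hn : n ≠ 0)
    (hs : s = {X | dist3 X C = ρ ∧ dot3 (X - C) n = 0})
    (h1 : ((0 : ℝ), (0 : ℝ), p) ∈ s) (h2 : ((0 : ℝ), (0 : ℝ), -p) ∈ s)
    (Q : ℝ × ℝ × ℝ) (hQ : Q ∈ s)
    (hQS : dist3 Q ((0 : ℝ), (0 : ℝ), c) = Real.sqrt (c ^ 2 - p ^ 2)) :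
    ∃ t : ℝ, ((0 : ℝ), (0 : ℝ), c) = Q + t • cross3 n (Q - C) := by
  subst hs
  obtain ⟨n1, n2, n3⟩ := n
  obtain ⟨c1, c2, c3⟩ := C
  obtain ⟨q1, q2, q3⟩ := Q
  simp only [Set.mem_setOf_eq, dist3, dot3, Prod.mk_sub_mk] at h1 h2 hQ hQS
  obtain ⟨hd1, hp1⟩ := h1
  obtain ⟨hd2, hp2⟩ := h2
  obtain ⟨hdQ, hpQ⟩ := hQ
  -- de-sqrt
  have e1 : (0 - c1) ^ 2 + (0 - c2) ^ 2 + (p - c3) ^ 2 = ρ ^ 2 := by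
    rw [← hd1, Real.sq_sqrt (by positivity)]
  have e2 : (0 - c1) ^ 2 + (0 - c2) ^ 2 + (-p - c3) ^ 2 = ρ ^ 2 := by
    rw [← hd2, Real.sq_sqrt (by positivity)]
  have eQ : (q1 - c1) ^ 2 + (q2 - c2) ^ 2 + (q3 - c3) ^ 2 = ρ ^ 2 := by
    rw [← hdQ, Real.sq_sqrt (by positivity)]
  have eS : (q1 - 0) ^ 2 + (q2 - 0) ^ 2 + (q3 - c) ^ 2 = c ^ 2 - p ^ 2 := by
    rw [← Real.sq_sqrt (le_of_lt (sub_pos.mpr hc)), ← hQS,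
      Real.sq_sqrt (by positivity)]
  -- the pencil geometry forces n₃ = 0 and c₃ = 0
  have hn3 : n3 = 0 := by
    have h : 2 * p * n3 = 0 := by linear_combination hp1 - hp2
    have := mul_ne_zero (two_ne_zero (α := ℝ)) hp
    exact (mul_eq_zero.mp h).resolve_left (by simpa using this)
  have hc3 : c3 = 0 := by
    have h : 4 * p * c3 = 0 := by linear_combination e2 - e1
    have h4p : (4 : ℝ) * p ≠ 0 := mul_ne_zero (by norm_num) hp
    exact (mul_eq_zero.mp h).resolve_left h4p
  subst hn3 hc3
  set v : ℝ × ℝ × ℝ := (0 - q1, 0 - q2, c - q3) with hv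
  set u : ℝ × ℝ × ℝ := (q1 - c1, q2 - c2, q3 - 0) with hu
  set nn : ℝ × ℝ × ℝ := (n1, n2, (0:ℝ)) with hnn
  have hVn : dot3 v nn = 0 := by
    simp only [dot3, hv, hnn]
    linear_combination hp1 - hpQ
  have hVu : dot3 v u = 0 := by
    simp only [dot3, hv, hu]
    linear_combination (e1 - eQ - eS) / 2
  have hnu : dot3 nn u = 0 := by
    simp only [dot3, hnn, hu]
    linear_combination hpQ
  have hcross : cross3 v (cross3 nn u) = 0 := triple_zero v nn u hVn hVu
  have hww : dot3 (cross3 nn u) (cross3 nn u) ≠ 0 := by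
    have hn12 : 0 < n1 ^ 2 + n2 ^ 2 := by
      rcases lt_or_eq_of_le (by positivity : (0:ℝ) ≤ n1 ^ 2 + n2 ^ 2) with h | h
      · exact h
      · exfalso
        have hn1 : n1 = 0 := by
          have h1 : n1 ^ 2 = 0 := by linarith [sq_nonneg n1, sq_nonneg n2]
          exact pow_eq_zero_iff (by norm_num) |>.mp h1
        have hn2 : n2 = 0 := by
          have h2 : n2 ^ 2 = 0 := by linarith [sq_nonneg n1, sq_nonneg n2]
          exact pow_eq_zero_iff (by norm_num) |>.mp h2
        exact hn (by simp [hnn, hn1, hn2, Prod.ext_iff])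
    have huu : dot3 u u = ρ ^ 2 := by
      simp only [dot3, hu]; linear_combination eQ
    have lag : dot3 (cross3 nn u) (cross3 nn u)
        = dot3 nn nn * dot3 u u - (dot3 nn u) ^ 2 := by
      simp only [cross3, dot3, hnn, hu]; ring
    rw [lag, hnu, huu]
    have : dot3 nn nn = n1 ^ 2 + n2 ^ 2 := by simp only [dot3, hnn]; ring
    rw [this]
    have h0 : 0 < (n1 ^ 2 + n2 ^ 2) * ρ ^ 2 - 0 ^ 2 := by
      have := mul_pos hn12 (pow_pos hρ 2)
      nlinarith
    exact h0.ne'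
  have hpar := cross_zero_parallel v (cross3 nn u) hww hcross
  refine ⟨dot3 v (cross3 nn u) / dot3 (cross3 nn u) (cross3 nn u), ?_⟩
  have hgoal : ((0:ℝ), (0:ℝ), c) = (q1, q2, q3) + v := by
    simp [hv, Prod.ext_iff]
  have hu' : ((q1, q2, q3) : ℝ × ℝ × ℝ) - (c1, c2, 0) = u := by
    simp [hu, Prod.ext_iff]
  rw [hu', hgoal]
  exact congrArg (((q1, q2, q3) : ℝ × ℝ × ℝ) + ·) hpar
end

section
/- Let p, b, c ∈ ℝ and define the surface S = {(x,y,z) ∈ ℝ³ : x(x² + y² + z²) - x²(c² + 1 - p²) - 2bcxy - y²(b² + 1) - p²x = 0}. Then for every t ∈ ℝ and θ ∈ [0, 2π), the point (x(t,θ), y(t,θ), z(t,θ)) given by x = (R(t)cos θ + Q(t))/(2(1+t²)), y = t·(R(t)cos θ + Q(t))/(2(1+t²)), z = √(p² + Q(t)²/(4(1+t²)))·sin θ, where Q(t) = 1 - p² + t² + (c + bt)² and R(t) = √(4(1+t²)p² + Q(t)²), lies on S (assuming the quantities under the square roots are nonnegative). -/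
/-- The standard parametrization of the circular surface `CS(l,p)` of the line
`l(t) = (1, t, bt+c)` satisfies the cubic implicit equation
`x(x²+y²+z²) - x²(c²+1-p²) - 2bcxy - y²(b²+1) - p²x = 0`. -/
theorem stmt3 (p b c t θ : ℝ) (hθ : θ ∈ Set.Ico 0 (2 * Real.pi))
    (Q R x y z : ℝ)
    (hQ : Q = 1 - p ^ 2 + t ^ 2 + (c + b * t) ^ 2)
    (hQnonneg : 0 ≤ 4 * (1 + t ^ 2) * p ^ 2 + Q ^ 2)
    (hznonneg : 0 ≤ p ^ 2 + Q ^ 2 / (4 * (1 + t ^ 2)))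
    (hR : R = Real.sqrt (4 * (1 + t ^ 2) * p ^ 2 + Q ^ 2))
    (hx : x = (R * Real.cos θ + Q) / (2 * (1 + t ^ 2)))
    (hy : y = t * (R * Real.cos θ + Q) / (2 * (1 + t ^ 2)))
    (hz : z = Real.sqrt (p ^ 2 + Q ^ 2 / (4 * (1 + t ^ 2))) * Real.sin θ) :
    x * (x ^ 2 + y ^ 2 + z ^ 2) - x ^ 2 * (c ^ 2 + 1 - p ^ 2) - 2 * b * c * x * y -
      y ^ 2 * (b ^ 2 + 1) - p ^ 2 * x = 0 := by
  have hD : (0:ℝ) < 1 + t ^ 2 := by positivity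
  have hD' : (2 * (1 + t ^ 2)) ≠ 0 := by positivity
  have hR2 : R ^ 2 = 4 * (1 + t ^ 2) * p ^ 2 + Q ^ 2 := by
    rw [hR, Real.sq_sqrt hQnonneg]
  have hz2 : z ^ 2 = (p ^ 2 + Q ^ 2 / (4 * (1 + t ^ 2))) * (1 - Real.cos θ ^ 2) := by
    rw [hz, mul_pow, Real.sq_sqrt hznonneg]
    linear_combination (p ^ 2 + Q ^ 2 / (4 * (1 + t ^ 2))) * Real.sin_sq_add_cos_sq θ
  have hy' : y = t * x := by rw [hx, hy]; ring
  have hx' : x * (2 * (1 + t ^ 2)) = R * Real.cos θ + Q := by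
    rw [hx]; field_simp
  have key : (1 + t ^ 2) * x ^ 2 + z ^ 2 - x * Q - p ^ 2 = 0 := by
    rw [hz2]
    have hD4 : (4 * (1 + t ^ 2)) ≠ 0 := by positivity
    field_simp
    linear_combination (2 * (1 + t ^ 2) * x - Q + R * Real.cos θ) * hx' +
      Real.cos θ ^ 2 * hR2
  rw [hy', hQ] at *
  linear_combination x * key
end

section
/- Let p ∈ ℝ and define F(x,y,z) = xy(x²+y²+z²)² - (x⁴ + 2x²y² + p⁴x²y² + y⁴ + 2p²xyz²) + p⁴xy. For every t ∈ ℝ \ {0}, the point (t, 1/t, 0) satisfies F = 0, and the gradient of F vanishes at every point (0, 0, z₀) of the z-axis; i.e., every point of the z-axis is a singular point of the sextic surface F = 0. -/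
/-- Implicit equation of the circular surface `CS(h₁,p)` for the hyperbola
`h₁(t) = (t, 1/t, 0)`, as a function on `ℝ × ℝ × ℝ`. -/
def sexticF (p : ℝ) (P : ℝ × ℝ × ℝ) : ℝ :=
  P.1 * P.2.1 * (P.1 ^ 2 + P.2.1 ^ 2 + P.2.2 ^ 2) ^ 2 -
    (P.1 ^ 4 + 2 * P.1 ^ 2 * P.2.1 ^ 2 + p ^ 4 * P.1 ^ 2 * P.2.1 ^ 2 + P.2.1 ^ 4 +
      2 * p ^ 2 * P.1 * P.2.1 * P.2.2 ^ 2) + p ^ 4 * P.1 * P.2.1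

/-- The hyperbola `h₁` lies on the sextic `F = 0`, and every point of the
`z`-axis is a singular point of this surface: `F` and its gradient vanish there. -/
theorem stmt6 (p : ℝ) :
    (∀ t : ℝ, t ≠ 0 → sexticF p (t, 1 / t, 0) = 0) ∧
    (∀ z₀ : ℝ, sexticF p ((0 : ℝ), (0 : ℝ), z₀) = 0 ∧
      fderiv ℝ (sexticF p) ((0 : ℝ), (0 : ℝ), z₀) = 0) := by
  constructor
  · intro t ht
    simp only [sexticF]
    field_simp
    ring
  · intro z₀
    set G : ℝ × ℝ × ℝ → ℝ := fun P =>
      P.2.1 * (P.1 ^ 2 + P.2.1 ^ 2 + P.2.2 ^ 2) ^ 2 - P.1 ^ 3 - 2 * P.1 * P.2.1 ^ 2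
        - p ^ 4 * P.1 * P.2.1 ^ 2 + p ^ 4 * P.2.1 - 2 * p ^ 2 * P.2.1 * P.2.2 ^ 2 with hGdef
    set H : ℝ × ℝ × ℝ → ℝ := fun P => -P.2.1 ^ 3 with hHdef
    have hfact : sexticF p = fun P => P.1 * G P + P.2.1 * H P := by
      funext P
      simp only [sexticF, hGdef, hHdef]
      ring
    have pt : ℝ × ℝ × ℝ := ((0 : ℝ), (0 : ℝ), z₀)
    refine ⟨by simp [sexticF], ?_⟩
    have hG : DifferentiableAt ℝ G ((0 : ℝ), (0 : ℝ), z₀) := by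
      simp only [hGdef]; fun_prop
    have hH : DifferentiableAt ℝ H ((0 : ℝ), (0 : ℝ), z₀) := by
      simp only [hHdef]; fun_prop
    have hx : HasFDerivAt (fun P : ℝ × ℝ × ℝ => P.1)
        (ContinuousLinearMap.fst ℝ ℝ (ℝ × ℝ)) ((0 : ℝ), (0 : ℝ), z₀) := hasFDerivAt_fst
    have hy : DifferentiableAt ℝ (fun P : ℝ × ℝ × ℝ => P.2.1) ((0 : ℝ), (0 : ℝ), z₀) := by
      fun_prop
    have h1 : HasFDerivAt (fun P : ℝ × ℝ × ℝ => P.1 * G P) (0 : (ℝ × ℝ × ℝ) →L[ℝ] ℝ) ((0 : ℝ), (0 : ℝ), z₀) := by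
      have := hx.mul hG.hasFDerivAt
      have hG0 : G ((0 : ℝ), (0 : ℝ), z₀) = 0 := by simp [hGdef]
      exact (by simpa [hG0] using this : HasFDerivAt ((fun P : ℝ × ℝ × ℝ => P.1) * G) (0 : (ℝ × ℝ × ℝ) →L[ℝ] ℝ) ((0 : ℝ), (0 : ℝ), z₀))
    have h2 : HasFDerivAt (fun P : ℝ × ℝ × ℝ => P.2.1 * H P) (0 : (ℝ × ℝ × ℝ) →L[ℝ] ℝ) ((0 : ℝ), (0 : ℝ), z₀) := by
      have := HasFDerivAt.mul (𝕜 := ℝ) hy.hasFDerivAt hH.hasFDerivAt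
      have hH0 : H ((0 : ℝ), (0 : ℝ), z₀) = 0 := by simp [hHdef]
      exact (by simpa [hH0] using this : HasFDerivAt ((fun P : ℝ × ℝ × ℝ => P.2.1) * H) (0 : (ℝ × ℝ × ℝ) →L[ℝ] ℝ) ((0 : ℝ), (0 : ℝ), z₀))
    have hsum : HasFDerivAt (sexticF p) (0 : (ℝ × ℝ × ℝ) →L[ℝ] ℝ) ((0 : ℝ), (0 : ℝ), z₀) := by
      rw [hfact]
      exact (by simpa using h1.add h2 : HasFDerivAt ((fun P : ℝ × ℝ × ℝ => P.1 * G P) + fun P => P.2.1 * H P) (0 : (ℝ × ℝ × ℝ) →L[ℝ] ℝ) ((0 : ℝ), (0 : ℝ), z₀))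
    exact hsum.fderiv
end

section
/- Let p ∈ ℝ and let α : I → ℝ³ be a curve with α(t) = (α₁(t), α₂(t), α₃(t)) and α₁(t)² + α₂(t)² ≠ 0 for all t. Define γ(t) = ((‖α(t)‖² - p²)/(2(α₁(t)² + α₂(t)²)))·(α₁(t), α₂(t), 0), r(t) = √(p² + (‖α(t)‖² - p²)²/(4(α₁(t)²+α₂(t)²))), a₁(t) = (α₁(t), α₂(t), 0)/√(α₁(t)²+α₂(t)²), a₂ = (0,0,1). Then ‖a₁(t)‖ = ‖a₂‖ = 1, ⟨a₁(t), a₂⟩ = 0 for all t, and α(t) = γ(t) + r(t)(cos θ(t) a₁(t) + sin θ(t) a₂) for some θ(t), i.e. every point α(t) lies on the generating circle V(t, ·) = γ(t) + r(t)(cos θ a₁(t) + sin θ a₂); moreover the points (0,0,p) and (0,0,-p) lie on every generating circle (assuming p² + (‖α(t)‖²-p²)²/(4(α₁²+α₂²)) ≥ 0). -/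
/-- Euclidean norm on `ℝ × ℝ × ℝ`. -/
noncomputable def norm3 (v : ℝ × ℝ × ℝ) : ℝ :=
  Real.sqrt (v.1 ^ 2 + v.2.1 ^ 2 + v.2.2 ^ 2)

lemma exists_theta (r c s : ℝ) (hr : 0 ≤ r) (h : c ^ 2 + s ^ 2 = r ^ 2) :
    ∃ θ : ℝ, r * Real.cos θ = c ∧ r * Real.sin θ = s := by
  rcases hr.eq_or_lt with h0 | h0
  · refine ⟨0, ?_, ?_⟩ <;> simp <;> nlinarith [sq_nonneg c, sq_nonneg s]
  · have hcr : -1 ≤ c / r := by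
      rw [le_div_iff₀ h0]; nlinarith [sq_nonneg (c + r), sq_nonneg s]
    have hcr' : c / r ≤ 1 := by
      rw [div_le_iff₀ h0]; nlinarith [sq_nonneg (c - r), sq_nonneg s]
    have hsin : Real.sin (Real.arccos (c / r)) = |s| / r := by
      rw [Real.sin_arccos]
      have : 1 - (c / r) ^ 2 = (|s| / r) ^ 2 := by
        field_simp
        nlinarith [sq_abs s]
      rw [this, Real.sqrt_sq (by positivity)]
    have hcos : Real.cos (Real.arccos (c / r)) = c / r := Real.cos_arccos hcr hcr'
    rcases le_or_gt 0 s with hs | hs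
    · refine ⟨Real.arccos (c / r), ?_, ?_⟩
      · rw [hcos]; field_simp
      · rw [hsin, abs_of_nonneg hs]; field_simp
    · refine ⟨-Real.arccos (c / r), ?_, ?_⟩
      · rw [Real.cos_neg, hcos]; field_simp
      · rw [Real.sin_neg, hsin, abs_of_neg hs]; field_simp

/-- The surface `CS(α,p)` admits a presentation as a circular surface in the sense
of Izumiya–Saji–Takeuchi: with the stated `γ`, `r`, `a₁`, `a₂`, the frame `a₁, a₂`
is orthonormal, every point `α(t)` lies on the generating circle
`θ ↦ γ(t) + r(t)(cos θ a₁(t) + sin θ a₂)`, and the points `(0,0,±p)` lie on every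
generating circle. -/
theorem stmt13 (p : ℝ) (I : Set ℝ) (α₁ α₂ α₃ : ℝ → ℝ)
    (hα : ∀ t ∈ I, α₁ t ^ 2 + α₂ t ^ 2 ≠ 0)
    (hrad : ∀ t ∈ I, 0 ≤ p ^ 2 +
      (α₁ t ^ 2 + α₂ t ^ 2 + α₃ t ^ 2 - p ^ 2) ^ 2 / (4 * (α₁ t ^ 2 + α₂ t ^ 2))) :
    ∀ t ∈ I,
      let n : ℝ := α₁ t ^ 2 + α₂ t ^ 2
      let γ : ℝ × ℝ × ℝ :=
        (((n + α₃ t ^ 2 - p ^ 2) / (2 * n)) * α₁ t,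
          ((n + α₃ t ^ 2 - p ^ 2) / (2 * n)) * α₂ t, 0)
      let r : ℝ := Real.sqrt (p ^ 2 + (n + α₃ t ^ 2 - p ^ 2) ^ 2 / (4 * n))
      let a₁ : ℝ × ℝ × ℝ := (α₁ t / Real.sqrt n, α₂ t / Real.sqrt n, 0)
      let a₂ : ℝ × ℝ × ℝ := ((0 : ℝ), (0 : ℝ), (1 : ℝ))
      norm3 a₁ = 1 ∧ norm3 a₂ = 1 ∧ dot3 a₁ a₂ = 0 ∧
      (∃ θ : ℝ, (α₁ t, α₂ t, α₃ t) =
        γ + r • (Real.cos θ • a₁ + Real.sin θ • a₂)) ∧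
      (∃ θ : ℝ, ((0 : ℝ), (0 : ℝ), p) =
        γ + r • (Real.cos θ • a₁ + Real.sin θ • a₂)) ∧
      (∃ θ : ℝ, ((0 : ℝ), (0 : ℝ), -p) =
        γ + r • (Real.cos θ • a₁ + Real.sin θ • a₂)) := by
  intro t ht n γ r a₁ a₂
  have hn0 : (0:ℝ) < n := lt_of_le_of_ne (by positivity) (Ne.symm (hα t ht))
  have hsq : Real.sqrt n ^ 2 = n := Real.sq_sqrt hn0.le
  have hsn0 : Real.sqrt n ≠ 0 := by positivity
  have hn : n ≠ 0 := hn0.ne'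
  set m : ℝ := n + α₃ t ^ 2 - p ^ 2 with hm
  have hr2 : r ^ 2 = p ^ 2 + m ^ 2 / (4 * n) := Real.sq_sqrt (hrad t ht)
  have hr0 : 0 ≤ r := Real.sqrt_nonneg _
  have h2s : 2 * Real.sqrt n * Real.sqrt n = 2 * n := by
    rw [mul_assoc, Real.mul_self_sqrt hn0.le]
  refine ⟨?_, ?_, ?_, ?_, ?_, ?_⟩
  · show Real.sqrt ((α₁ t / Real.sqrt n) ^ 2 + (α₂ t / Real.sqrt n) ^ 2 + 0 ^ 2) = 1
    have : (α₁ t / Real.sqrt n) ^ 2 + (α₂ t / Real.sqrt n) ^ 2 + 0 ^ 2 = 1 := by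
      rw [div_pow, div_pow, hsq]
      field_simp
      simp [n]
    rw [this, Real.sqrt_one]
  · show Real.sqrt (0 ^ 2 + 0 ^ 2 + 1 ^ 2) = 1
    norm_num
  · show α₁ t / Real.sqrt n * 0 + α₂ t / Real.sqrt n * 0 + 0 * 1 = 0
    ring
  · obtain ⟨θ, hc, hs⟩ := exists_theta r ((2 * n - m) / (2 * Real.sqrt n)) (α₃ t) hr0 (by
      rw [div_pow, mul_pow, hsq, hr2, hm]
      field_simp
      ring)
    refine ⟨θ, ?_⟩
    show (α₁ t, α₂ t, α₃ t) = (_, _, _) + r • (Real.cos θ • (_, _, _) + Real.sin θ • ((0:ℝ),(0:ℝ),(1:ℝ)))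
    simp only [Prod.smul_mk, smul_eq_mul, Prod.mk_add_mk, Prod.mk.injEq]
    refine ⟨?_, ?_, ?_⟩
    · have h1 : r * (Real.cos θ * (α₁ t / Real.sqrt n) + Real.sin θ * 0)
          = (r * Real.cos θ) * (α₁ t / Real.sqrt n) := by ring
      rw [h1, hc, div_mul_div_comm, h2s]
      field_simp
      try ring
    · have h1 : r * (Real.cos θ * (α₂ t / Real.sqrt n) + Real.sin θ * 0)
          = (r * Real.cos θ) * (α₂ t / Real.sqrt n) := by ring
      rw [h1, hc, div_mul_div_comm, h2s]
      field_simp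
      try ring
    · have h1 : r * (Real.cos θ * 0 + Real.sin θ * 1) = r * Real.sin θ := by ring
      rw [h1, hs]; ring
  · obtain ⟨θ, hc, hs⟩ := exists_theta r (-m / (2 * Real.sqrt n)) p hr0 (by
      rw [div_pow, mul_pow, hsq, hr2, neg_pow]
      ring)
    refine ⟨θ, ?_⟩
    show ((0:ℝ), (0:ℝ), p) = (_, _, _) + r • (Real.cos θ • (_, _, _) + Real.sin θ • ((0:ℝ),(0:ℝ),(1:ℝ)))
    simp only [Prod.smul_mk, smul_eq_mul, Prod.mk_add_mk, Prod.mk.injEq]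
    refine ⟨?_, ?_, ?_⟩
    · have h1 : r * (Real.cos θ * (α₁ t / Real.sqrt n) + Real.sin θ * 0)
          = (r * Real.cos θ) * (α₁ t / Real.sqrt n) := by ring
      rw [h1, hc, div_mul_div_comm, h2s]
      field_simp
      try ring
    · have h1 : r * (Real.cos θ * (α₂ t / Real.sqrt n) + Real.sin θ * 0)
          = (r * Real.cos θ) * (α₂ t / Real.sqrt n) := by ring
      rw [h1, hc, div_mul_div_comm, h2s]
      field_simp
      try ring
    · have h1 : r * (Real.cos θ * 0 + Real.sin θ * 1) = r * Real.sin θ := by ring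
      rw [h1, hs]; ring
  · obtain ⟨θ, hc, hs⟩ := exists_theta r (-m / (2 * Real.sqrt n)) (-p) hr0 (by
      rw [div_pow, mul_pow, hsq, hr2, neg_pow, neg_pow]
      ring)
    refine ⟨θ, ?_⟩
    show ((0:ℝ), (0:ℝ), -p) = (_, _, _) + r • (Real.cos θ • (_, _, _) + Real.sin θ • ((0:ℝ),(0:ℝ),(1:ℝ)))
    simp only [Prod.smul_mk, smul_eq_mul, Prod.mk_add_mk, Prod.mk.injEq]
    refine ⟨?_, ?_, ?_⟩
    · have h1 : r * (Real.cos θ * (α₁ t / Real.sqrt n) + Real.sin θ * 0)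
          = (r * Real.cos θ) * (α₁ t / Real.sqrt n) := by ring
      rw [h1, hc, div_mul_div_comm, h2s]
      field_simp
      try ring
    · have h1 : r * (Real.cos θ * (α₂ t / Real.sqrt n) + Real.sin θ * 0)
          = (r * Real.cos θ) * (α₂ t / Real.sqrt n) := by ring
      rw [h1, hc, div_mul_div_comm, h2s]
      field_simp
      try ring
    · have h1 : r * (Real.cos θ * 0 + Real.sin θ * 1) = r * Real.sin θ := by ring
      rw [h1, hs]; ring
end
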